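/- arXiv:2109.14354 — 3 statements merged into one kernel-verified Lean document; each statement's English description precedes it below -/
import Mathlib

section
/- For a complex number Ψ with nonzero imaginary part, (∫₀^{2π} tan(Ψ - φ) dφ)² = (2π)² · (-1), i.e., ∫₀^{2π} tan(Ψ - φ) dφ = ±2πi. -/
open Real intervalIntegral

lemma my_interval_integral_conj {f : ℝ → ℂ} {a b : ℝ} :
    ∫ x in a..b, (starRingEnd ℂ) (f x) = (starRingEnd ℂ) (∫ x in a..b, f x) := by
  simp only [intervalIntegral, ← integral_conj, map_sub]

lemma tan_conj (w : ℂ) : Complex.tan ((starRingEnd ℂ) w) = (starRingEnd ℂ) (Complex.tan w) := by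
  simp [Complex.tan_eq_sin_div_cos, Complex.sin_conj, Complex.cos_conj, map_div₀]

lemma integral_tan_pos (Ψ : ℂ) (h : 0 < Ψ.im) :
    (∫ φ in (0:ℝ)..(2 * π), Complex.tan (Ψ - φ)) = 2 * π * Complex.I := by
  set c : ℂ := Complex.exp (2 * Complex.I * Ψ) with hc_def
  have hc : ‖c‖ < 1 := by
    rw [hc_def, Complex.norm_exp]
    have h2 : (2 * Complex.I * Ψ).re = -2 * Ψ.im := by simp
    rw [h2]
    exact Real.exp_lt_one_iff.mpr (by linarith)
  set u : ℝ → ℂ := fun φ => c * Complex.exp (-(2 * Complex.I * φ)) with hu_def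
  have habs : ∀ φ : ℝ, ‖u φ‖ < 1 := by
    intro φ
    have h0 : (-(2 * Complex.I * (φ:ℂ))).re = 0 := by simp
    simp only [hu_def, norm_mul, Complex.norm_exp, h0, Real.exp_zero, mul_one]
    exact hc
  have hne : ∀ φ : ℝ, 1 + u φ ≠ 0 := by
    intro φ h0
    have := habs φ
    rw [show u φ = -1 by linear_combination h0] at this
    simp at this
  have hslit : ∀ φ : ℝ, 1 + u φ ∈ Complex.slitPlane := by
    intro φ
    left
    have h1 : |(u φ).re| ≤ ‖u φ‖ := Complex.abs_re_le_norm _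
    have := habs φ
    simp only [Complex.add_re, Complex.one_re]
    cases abs_le.mp h1 with
    | intro hl hr => linarith
  have hcos : ∀ φ : ℝ, Complex.cos (Ψ - φ) ≠ 0 := by
    intro φ hc0
    rw [Complex.cos_eq_zero_iff] at hc0
    obtain ⟨k, hk⟩ := hc0
    have h1 : (Ψ - (φ:ℂ)).im = 0 := by rw [hk]; simp
    simp [Complex.sub_im] at h1
    exact absurd h1 (ne_of_gt h)
  -- derivative of u
  have hu' : ∀ φ : ℝ, HasDerivAt u (u φ * (-(2 * Complex.I))) φ := by
    intro φ
    have h1 : HasDerivAt (fun t : ℝ => ((t : ℂ))) 1 φ := by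
      simpa using (hasDerivAt_id φ).ofReal_comp
    have h2 : HasDerivAt (fun t : ℝ => -(2 * Complex.I * (t:ℂ)))
        (-(2 * Complex.I)) φ := by
      exact (h1.const_mul (2 * Complex.I)).neg.congr_deriv (by ring)
    have h3 := h2.cexp
    have h4 := h3.const_mul c
    refine h4.congr_deriv ?_
    rw [hu_def]; ring
  -- the antiderivative
  set F : ℝ → ℂ := fun t => Complex.I * t + Complex.log (1 + u t) with hF_def
  have hF : ∀ φ : ℝ, HasDerivAt F (Complex.tan (Ψ - φ)) φ := by
    intro φ
    have h1 : HasDerivAt (fun t : ℝ => Complex.I * (t:ℂ)) Complex.I φ := by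
      simpa using ((hasDerivAt_id φ).ofReal_comp).const_mul Complex.I
    have h2 : HasDerivAt (fun t : ℝ => 1 + u t) (u φ * (-(2 * Complex.I))) φ :=
      (hu' φ).const_add 1
    have h3 := (h2.clog_real (hslit φ))
    have h4 := h1.add h3
    refine h4.congr_deriv ?_
    symm
    -- tan(Ψ-φ) = I + (u φ * -(2I))/(1+u φ)
    set A : ℂ := Complex.exp ((Ψ - φ) * Complex.I) with hA_def
    have hA : A ≠ 0 := Complex.exp_ne_zero _
    have hu2 : u φ = A ^ 2 := by
      simp only [hu_def, hc_def, hA_def, sq, ← Complex.exp_add]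
      congr 1
      ring
    have h1A : (1 : ℂ) + A ^ 2 ≠ 0 := by rw [← hu2]; exact hne φ
    rw [Complex.tan_eq_sin_div_cos, Complex.sin, Complex.cos, hu2, neg_mul, Complex.exp_neg, ← hA_def]
    field_simp [hA, h1A]
    have hv : (1 + A ^ 2) * (1 + A ^ 2)⁻¹ = 1 := mul_inv_cancel₀ h1A
    rw [add_comm (A ^ 2) 1, mul_div_assoc, div_self h1A]; ring
  have hint : IntervalIntegrable (fun φ : ℝ => Complex.tan (Ψ - φ))
      MeasureTheory.volume 0 (2 * π) := by
    rw [show (fun φ : ℝ => Complex.tan (Ψ - φ))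
        = fun φ : ℝ => Complex.sin (Ψ - φ) / Complex.cos (Ψ - φ) from
      funext fun φ => Complex.tan_eq_sin_div_cos _]
    apply ContinuousOn.intervalIntegrable
    exact ContinuousOn.div
      ((Complex.continuous_sin.comp (continuous_const.sub Complex.continuous_ofReal)).continuousOn)
      ((Complex.continuous_cos.comp (continuous_const.sub Complex.continuous_ofReal)).continuousOn)
      (fun x _ => hcos x)
  rw [integral_eq_sub_of_hasDerivAt (fun φ _ => hF φ) hint]
  have hper : u (2 * π) = u 0 := by
    rw [hu_def]
    simp only
    congr 1
    rw [show -(2 * Complex.I * ((2 * π : ℝ):ℂ)) = (-2 : ℤ) * (2 * π * Complex.I) by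
      push_cast; ring]
    rw [Complex.exp_int_mul_two_pi_mul_I]
    simp
  rw [hF_def]
  simp [hper]
  ring

lemma integral_tan_neg (Ψ : ℂ) (h : Ψ.im < 0) :
    (∫ φ in (0:ℝ)..(2 * π), Complex.tan (Ψ - φ)) = -(2 * π * Complex.I) := by
  have h' : ((starRingEnd ℂ) Ψ).im > 0 := by
    simp [Complex.conj_im]; linarith
  have hconj : ∀ φ : ℝ, Complex.tan (Ψ - φ)
      = (starRingEnd ℂ) (Complex.tan ((starRingEnd ℂ) Ψ - φ)) := by
    intro φ
    rw [← tan_conj]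
    simp [map_sub, Complex.conj_conj, Complex.conj_ofReal]
  calc (∫ φ in (0:ℝ)..(2 * π), Complex.tan (Ψ - φ))
      = ∫ φ in (0:ℝ)..(2 * π), (starRingEnd ℂ) (Complex.tan ((starRingEnd ℂ) Ψ - φ)) := by
        simp_rw [hconj]
    _ = (starRingEnd ℂ) (∫ φ in (0:ℝ)..(2 * π), Complex.tan ((starRingEnd ℂ) Ψ - φ)) :=
        my_interval_integral_conj
    _ = -(2 * π * Complex.I) := by
        rw [integral_tan_pos _ h']
        simp only [map_mul, Complex.conj_I, Complex.conj_ofReal, map_ofNat]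
        ring

/-- For `Ψ ∈ ℂ` with nonzero imaginary part,
`∫₀^{2π} tan(Ψ - φ) dφ = 2πi` if `Im Ψ > 0` and `-2πi` if `Im Ψ < 0`;
in particular its square is `-(2π)²`. -/
theorem integral_tan_shift (Ψ : ℂ) (hΨ : Ψ.im ≠ 0) :
    (∫ φ in (0:ℝ)..(2 * π), Complex.tan (Ψ - φ))
      = (if 0 < Ψ.im then (2 * π * Complex.I) else -(2 * π * Complex.I)) ∧
    (∫ φ in (0:ℝ)..(2 * π), Complex.tan (Ψ - φ)) ^ 2 = (2 * π) ^ 2 * (-1) := by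
  have hval : (∫ φ in (0:ℝ)..(2 * π), Complex.tan (Ψ - φ))
      = (if 0 < Ψ.im then (2 * π * Complex.I) else -(2 * π * Complex.I)) := by
    rcases hΨ.lt_or_gt with hlt | hgt
    · rw [if_neg (not_lt.mpr hlt.le), integral_tan_neg Ψ hlt]
    · rw [if_pos hgt, integral_tan_pos Ψ hgt]
  refine ⟨hval, ?_⟩
  rw [hval]
  have : (2 * (π:ℂ) * Complex.I) ^ 2 = (2 * (π:ℂ)) ^ 2 * (-1) := by
    rw [mul_pow, Complex.I_sq]
  split
  · exact this
  · rw [neg_pow_two]; exact this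
end

section
/- If p : ℝ → ℂ is given by p(φ) = tan(Ψ - φ) with Im(Ψ) ≠ 0, then for every real ω, the principal value integral satisfies: 2π + (∫₀^{2π} p(φ) dφ)·p(ω) = -P∫₀^{2π} p(φ) cot(φ - ω) dφ. -/
open Real Filter MeasureTheory


lemma sin_ne_zero_of_between {x : ℝ} {k : ℤ} (h1 : (k:ℝ) * π < x) (h2 : x < ((k:ℝ)+1) * π) :
    Real.sin x ≠ 0 := by
  intro h
  obtain ⟨n, hn⟩ := Real.sin_eq_zero_iff.1 h
  have hπ := Real.pi_pos
  have hkn : (k:ℝ) < n := by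
    by_contra hc
    push_neg at hc
    have : (n:ℝ) * π ≤ (k:ℝ) * π := by nlinarith
    linarith [hn ▸ this]
  have hnk : (n:ℝ) < (k:ℝ) + 1 := by
    by_contra hc
    push_neg at hc
    have : ((k:ℝ)+1) * π ≤ (n:ℝ) * π := by nlinarith
    linarith [hn ▸ this]
  have h1' : k < n := by exact_mod_cast hkn
  have h2' : n < k + 1 := by exact_mod_cast hnk
  omega

lemma log_sin_sub_int (x : ℝ) (n : ℤ) :
    Real.log (Real.sin (x - n * π)) = Real.log (Real.sin x) := by
  have : Real.sin (x - n * π + n * π) = (-1)^n * Real.sin (x - n*π) := Real.sin_add_int_mul_pi _ n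
  simp only [sub_add_cancel] at this
  rcases Int.even_or_odd n with he | ho
  · rw [he.neg_one_zpow] at this
    rw [one_mul] at this
    rw [this]
  · rw [ho.neg_one_zpow] at this
    have : Real.sin (x - n*π) = - Real.sin x := by linarith [this]
    rw [this, Real.log_neg_eq_log]

lemma cos_ne_zero_of_im (Ψ : ℂ) (hΨ : Ψ.im ≠ 0) (x : ℝ) : Complex.cos (Ψ - x) ≠ 0 := by
  intro h
  obtain ⟨k, hk⟩ := Complex.cos_eq_zero_iff.1 h
  have : (Ψ - (x:ℂ)).im = 0 := by
    rw [hk]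
    simp
  simp at this
  exact hΨ this

lemma cot_contOn {ω : ℝ} {s : Set ℝ} (h : ∀ x ∈ s, Real.sin (x - ω) ≠ 0) :
    ContinuousOn (fun x => Real.cot (x - ω)) s := by
  have : ∀ x ∈ s, Real.cot (x - ω) = Real.cos (x-ω) / Real.sin (x-ω) := fun x _ => Real.cot_eq_cos_div_sin _
  refine ContinuousOn.congr ?_ this
  exact ((Real.continuous_cos.comp (continuous_id.sub continuous_const)).continuousOn).div
    ((Real.continuous_sin.comp (continuous_id.sub continuous_const)).continuousOn)
    h

lemma integral_cot (ω a b : ℝ) (h : ∀ x ∈ Set.uIcc a b, Real.sin (x - ω) ≠ 0) :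
    ∫ x in a..b, Real.cot (x - ω)
      = Real.log (Real.sin (b - ω)) - Real.log (Real.sin (a - ω)) := by
  have hderiv : ∀ x ∈ Set.uIcc a b,
      HasDerivAt (fun y => Real.log (Real.sin (y - ω))) (Real.cot (x - ω)) x := by
    intro x hx
    have h1 : HasDerivAt (fun y : ℝ => y - ω) 1 x := (hasDerivAt_id x).sub_const ω
    have h2 : HasDerivAt (fun y : ℝ => Real.sin (y - ω)) (Real.cos (x - ω)) x := by
      simpa [Function.comp_def] using (Real.hasDerivAt_sin (x - ω)).comp x h1
    have h3 := (Real.hasDerivAt_log (h x hx)).comp x h2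
    simpa [Real.cot_eq_cos_div_sin, div_eq_inv_mul, Function.comp_def] using h3
  exact intervalIntegral.integral_eq_sub_of_hasDerivAt hderiv
    ((cot_contOn h).intervalIntegrable)

lemma tan_cot_identity (Ψ : ℂ) (hΨ : Ψ.im ≠ 0) (ω φ : ℝ) (hs : Real.sin (φ - ω) ≠ 0) :
    Complex.tan (Ψ - φ) * Complex.cot ((φ : ℂ) - ω)
      = -1 + Complex.tan (Ψ - ω) * Complex.cot ((φ:ℂ) - ω)
        - Complex.tan (Ψ - ω) * Complex.tan (Ψ - φ) := by
  have hcφ : Complex.cos (Ψ - φ) ≠ 0 := cos_ne_zero_of_im Ψ hΨ φ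
  have hcω : Complex.cos (Ψ - ω) ≠ 0 := cos_ne_zero_of_im Ψ hΨ ω
  have hsφ : Complex.sin ((φ:ℂ) - ω) ≠ 0 := by
    have : ((Real.sin (φ - ω) : ℝ) : ℂ) ≠ 0 := by exact_mod_cast hs
    rwa [Complex.ofReal_sin, Complex.ofReal_sub] at this
  have key : Complex.sin (Ψ - ω) = Complex.sin ((Ψ - φ) + ((φ:ℂ) - ω)) := by ring_nf
  have key2 : Complex.cos (Ψ - ω) = Complex.cos ((Ψ - φ) + ((φ:ℂ) - ω)) := by ring_nf
  rw [Complex.tan_eq_sin_div_cos, Complex.tan_eq_sin_div_cos, Complex.cot_eq_cos_div_sin]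
  field_simp
  rw [key, key2, Complex.sin_add, Complex.cos_add]
  ring

lemma tan_comp_continuous (Ψ : ℂ) (hΨ : Ψ.im ≠ 0) :
    Continuous (fun φ : ℝ => Complex.tan (Ψ - φ)) := by
  rw [continuous_iff_continuousAt]
  intro x
  have h1 : ContinuousAt (fun φ : ℝ => Ψ - (φ:ℂ)) x :=
    ((continuous_const.sub Complex.continuous_ofReal)).continuousAt
  have h2 : ContinuousAt Complex.tan (Ψ - (x:ℂ)) :=
    Complex.continuousAt_tan.2 (cos_ne_zero_of_im Ψ hΨ x)
  exact Filter.Tendsto.comp h2 h1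

lemma cot_comp_contOn (ω : ℝ) {s : Set ℝ} (h : ∀ x ∈ s, Real.sin (x - ω) ≠ 0) :
    ContinuousOn (fun φ : ℝ => Complex.cot ((φ:ℂ) - ω)) s := by
  have he : ∀ x ∈ s, Complex.cot ((x:ℂ) - ω) = ((Real.cot (x - ω) : ℝ) : ℂ) := by
    intro x hx
    rw [Complex.ofReal_cot, Complex.ofReal_sub]
  refine ContinuousOn.congr ?_ he
  exact Complex.continuous_ofReal.comp_continuousOn (by
    have : ∀ x ∈ s, Real.cot (x - ω) = Real.cos (x-ω) / Real.sin (x-ω) :=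
      fun x _ => Real.cot_eq_cos_div_sin _
    refine ContinuousOn.congr ?_ this
    exact ((Real.continuous_cos.comp (continuous_id.sub continuous_const)).continuousOn).div
      ((Real.continuous_sin.comp (continuous_id.sub continuous_const)).continuousOn) h)

/-- closed form of the integral over one interval avoiding the poles -/
lemma piece (Ψ : ℂ) (hΨ : Ψ.im ≠ 0) (ω a b : ℝ) (hab : a ≤ b)
    (hsin : ∀ x ∈ Set.uIcc a b, Real.sin (x - ω) ≠ 0) :
    ∫ x in a..b, Complex.tan (Ψ - x) * Complex.cot ((x:ℂ) - ω)
      = -(((b - a : ℝ)) : ℂ)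
        + Complex.tan (Ψ - ω) * ((Real.log (Real.sin (b - ω)) - Real.log (Real.sin (a - ω)) : ℝ) : ℂ)
        - Complex.tan (Ψ - ω) * ∫ x in a..b, Complex.tan (Ψ - x) := by
  have hcongr : Set.EqOn (fun x : ℝ => Complex.tan (Ψ - x) * Complex.cot ((x:ℂ) - ω))
      (fun x : ℝ => -1 + Complex.tan (Ψ - ω) * Complex.cot ((x:ℂ) - ω)
        - Complex.tan (Ψ - ω) * Complex.tan (Ψ - x)) (Set.uIcc a b) :=
    fun x hx => tan_cot_identity Ψ hΨ ω x (hsin x hx)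
  rw [intervalIntegral.integral_congr hcongr]
  have hint1 : IntervalIntegrable (fun x : ℝ => (-1 : ℂ)) volume a b :=
    intervalIntegrable_const
  have hint2 : IntervalIntegrable (fun x : ℝ => Complex.tan (Ψ - ω) * Complex.cot ((x:ℂ) - ω)) volume a b :=
    (((cot_comp_contOn ω hsin).const_smul (Complex.tan (Ψ - ω))).intervalIntegrable)
  have hint3 : IntervalIntegrable (fun x : ℝ => Complex.tan (Ψ - ω) * Complex.tan (Ψ - x)) volume a b :=
    ((continuous_const.mul (tan_comp_continuous Ψ hΨ)).intervalIntegrable a b)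
  rw [intervalIntegral.integral_sub (hint1.add hint2) hint3,
    intervalIntegral.integral_add hint1 hint2,
    intervalIntegral.integral_const, intervalIntegral.integral_const_mul,
    intervalIntegral.integral_const_mul]
  have hcot : ∫ x in a..b, Complex.cot ((x:ℂ) - ω)
      = ((Real.log (Real.sin (b - ω)) - Real.log (Real.sin (a - ω)) : ℝ) : ℂ) := by
    have : ∀ x ∈ Set.uIcc a b, Complex.cot ((x:ℂ) - ω) = ((Real.cot (x - ω) : ℝ) : ℂ) := by
      intro x hx; rw [Complex.ofReal_cot, Complex.ofReal_sub]
    rw [intervalIntegral.integral_congr this, intervalIntegral.integral_ofReal,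
      integral_cot ω a b hsin]
  rw [hcot]
  simp only [smul_eq_mul, Complex.real_smul, Complex.ofReal_sub, mul_neg, mul_one]

/-- Lothe's integral equation (scalar, eigenvalue form): with
`p(φ) = tan(Ψ - φ)`, `Im Ψ ≠ 0`, for every real `ω`,
`2π + (∫₀^{2π} p) p(ω) = -P∫₀^{2π} p(φ) cot(φ-ω) dφ`, the principal value
being the limit as `ε → 0⁺` of the integral over `[0,2π]` minus
`ε`-neighbourhoods of the points `φ ≡ ω (mod π)`. -/
theorem lothe_integral_equation (Ψ : ℂ) (hΨ : Ψ.im ≠ 0) (ω : ℝ) :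
    Tendsto (fun ε : ℝ =>
        ∫ φ in {φ : ℝ | φ ∈ Set.Icc 0 (2 * π) ∧ ∀ k : ℤ, ε < |φ - ω - k * π|},
          Complex.tan (Ψ - φ) * Complex.cot ((φ : ℂ) - ω))
      (nhdsWithin 0 (Set.Ioi 0))
      (nhds (-(2 * π + (∫ φ in (0:ℝ)..(2 * π), Complex.tan (Ψ - φ))
        * Complex.tan (Ψ - ω)))) := by
  have hπ := Real.pi_pos
  set k₀ : ℤ := ⌊ω / π⌋ with hk₀
  set ω' : ℝ := ω - k₀ * π with hω'def
  have hωe : ω = ω' + k₀ * π := by rw [hω'def]; ring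
  have hω'0 : 0 ≤ ω' := by
    rw [hω'def]
    have h := Int.floor_le (ω / π)
    have h2 := mul_le_mul_of_nonneg_right h hπ.le
    rw [div_mul_cancel₀ _ hπ.ne'] at h2
    rw [← hk₀] at h2
    linarith
  have hω'1 : ω' < π := by
    rw [hω'def]
    have h := Int.lt_floor_add_one (ω / π)
    have h2 := mul_lt_mul_of_pos_right h hπ
    rw [div_mul_cancel₀ _ hπ.ne'] at h2
    rw [← hk₀] at h2
    push_cast at h2
    linarith
  set T := Complex.tan (Ψ - ω) with hT
  set F : ℝ → ℂ := fun x => ∫ t in (0:ℝ)..x, Complex.tan (Ψ - t) with hFdef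
  have htanInt : ∀ a b : ℝ, IntervalIntegrable (fun t : ℝ => Complex.tan (Ψ - t)) volume a b :=
    fun a b => (tan_comp_continuous Ψ hΨ).intervalIntegrable a b
  have hFc : Continuous F := intervalIntegral.continuous_primitive htanInt 0
  have hF0 : F 0 = 0 := intervalIntegral.integral_same
  have hFint : ∀ a b : ℝ, (∫ x in a..b, Complex.tan (Ψ - x)) = F b - F a := by
    intro a b
    exact (intervalIntegral.integral_interval_sub_left (htanInt 0 b) (htanInt 0 a)).symm
  have hF2π : (∫ φ in (0:ℝ)..(2 * π), Complex.tan (Ψ - φ)) = F (2 * π) := rfl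
  -- reindexing of the pole condition
  have hiff : ∀ (ε φ : ℝ), (∀ k : ℤ, ε < |φ - ω - k * π|) ↔ (∀ m : ℤ, ε < |φ - ω' - m * π|) := by
    intro ε φ
    constructor
    · intro h m
      have h2 := h (m - k₀)
      have he : φ - ω - ((m - k₀ : ℤ) : ℝ) * π = φ - ω' - (m : ℝ) * π := by
        rw [hωe]; push_cast; ring
      rwa [he] at h2
    · intro h k
      have h2 := h (k + k₀)
      have he : φ - ω' - ((k + k₀ : ℤ) : ℝ) * π = φ - ω - (k : ℝ) * π := by
        rw [hωe]; push_cast; ring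
      rwa [he] at h2
  -- sin nonvanishing criterion relative to ω'
  have hsin : ∀ (r : ℝ) (n : ℤ), (n : ℝ) * π < r - ω' → r - ω' < ((n : ℝ) + 1) * π →
      Real.sin (r - ω) ≠ 0 := by
    intro r n h1 h2
    refine sin_ne_zero_of_between (k := n - k₀) ?_ ?_
    · rw [hωe]; push_cast; linarith
    · rw [hωe]; push_cast; linarith
  have hcont : ∀ (s : Set ℝ), (∀ x ∈ s, Real.sin (x - ω) ≠ 0) →
      ContinuousOn (fun φ : ℝ => Complex.tan (Ψ - φ) * Complex.cot ((φ : ℂ) - ω)) s :=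
    fun s h => ((tan_comp_continuous Ψ hΨ).continuousOn).mul (cot_comp_contOn ω h)
  -- set-integral to interval-integral conversions
  have int_Ico : ∀ (g : ℝ → ℂ) (a b : ℝ), a ≤ b →
      ∫ x in Set.Ico a b, g x = ∫ x in a..b, g x := by
    intro g a b h
    rw [intervalIntegral.integral_of_le h, MeasureTheory.integral_Ioc_eq_integral_Ioo,
      MeasureTheory.integral_Ico_eq_integral_Ioo]
  have int_Ioo : ∀ (g : ℝ → ℂ) (a b : ℝ), a ≤ b →
      ∫ x in Set.Ioo a b, g x = ∫ x in a..b, g x := by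
    intro g a b h
    rw [intervalIntegral.integral_of_le h, MeasureTheory.integral_Ioc_eq_integral_Ioo]
  have int_Ioc : ∀ (g : ℝ → ℂ) (a b : ℝ), a ≤ b →
      ∫ x in Set.Ioc a b, g x = ∫ x in a..b, g x := by
    intro g a b h
    rw [intervalIntegral.integral_of_le h]
  by_cases hω'z : ω' = 0
  · -- ω is an integer multiple of π
    set g : ℝ → ℂ := fun ε =>
      -((2 * π : ℝ) : ℂ) + 4 * (ε : ℂ)
        - T * ((F (π - ε) - F ε) + (F (2 * π - ε) - F (π + ε))) with hg
    have hgc : Continuous g := by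
      have c1 : Continuous fun ε : ℝ => F (π - ε) := hFc.comp (continuous_const.sub continuous_id)
      have c2 : Continuous fun ε : ℝ => F ε := hFc
      have c3 : Continuous fun ε : ℝ => F (2 * π - ε) :=
        hFc.comp (continuous_const.sub continuous_id)
      have c4 : Continuous fun ε : ℝ => F (π + ε) := hFc.comp (continuous_const.add continuous_id)
      exact (continuous_const.add (continuous_const.mul Complex.continuous_ofReal)).sub
        (continuous_const.mul ((c1.sub c2).add (c3.sub c4)))
    have hgt : Tendsto g (nhdsWithin 0 (Set.Ioi 0))
        (nhds (-(2 * π + (∫ φ in (0:ℝ)..(2 * π), Complex.tan (Ψ - φ)) * Complex.tan (Ψ - ω)))) := by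
      have h0 : g 0 = -(2 * π + (∫ φ in (0:ℝ)..(2 * π), Complex.tan (Ψ - φ)) * Complex.tan (Ψ - ω)) := by
        rw [hg, hF2π, ← hT]
        simp only [Complex.ofReal_zero, sub_zero, add_zero, mul_zero]
        rw [hF0]
        push_cast
        ring
      rw [← h0]
      exact (hgc.tendsto 0).mono_left nhdsWithin_le_nhds
    refine Tendsto.congr' ?_ hgt
    have hmem : Set.Ioo (0:ℝ) (π / 2) ∈ nhdsWithin (0:ℝ) (Set.Ioi 0) :=
      Ioo_mem_nhdsGT_of_mem (Set.mem_Ico.2 ⟨le_refl (0:ℝ), by positivity⟩)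
    filter_upwards [hmem] with ε hε
    have hε0 : 0 < ε := hε.1
    have hεπ : ε < π / 2 := hε.2
    -- the set
    have hset : {φ : ℝ | φ ∈ Set.Icc 0 (2 * π) ∧ ∀ k : ℤ, ε < |φ - ω - k * π|}
        = Set.Ioo ε (π - ε) ∪ Set.Ioo (π + ε) (2 * π - ε) := by
      ext φ
      simp only [Set.mem_setOf_eq, Set.mem_Icc, Set.mem_union, Set.mem_Ioo]
      rw [hiff ε φ, hω'z]
      constructor
      · rintro ⟨⟨hφ0, hφ2⟩, hm⟩
        have h0 := hm 0
        have h1 := hm 1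
        have h2 := hm 2
        simp only [Int.cast_zero, Int.cast_one, zero_mul, one_mul, sub_zero] at h0 h1 h2
        push_cast at h2
        have hA : ε < φ := by
          rcases lt_abs.1 h0 with hc | hc
          · exact hc
          · linarith
        have hB : φ < 2 * π - ε := by
          rcases lt_abs.1 h2 with hc | hc
          · linarith
          · linarith
        rcases lt_abs.1 h1 with hc | hc
        · right; exact ⟨by linarith, hB⟩
        · left; exact ⟨hA, by linarith⟩
      · intro hmem
        have hφb : 0 ≤ φ ∧ φ ≤ 2 * π := by
          rcases hmem with ⟨h, h'⟩ | ⟨h, h'⟩ <;> constructor <;> linarith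
        refine ⟨⟨hφb.1, hφb.2⟩, ?_⟩
        intro m
        rw [sub_zero]
        rcases hmem with ⟨h, h'⟩ | ⟨h, h'⟩
        · rcases le_or_gt m 0 with hm0 | hm0
          · have hm' : (m : ℝ) ≤ 0 := by exact_mod_cast hm0
            have : (m : ℝ) * π ≤ 0 := by nlinarith
            exact lt_abs.2 (Or.inl (by linarith))
          · have hm' : (1 : ℝ) ≤ (m : ℝ) := by exact_mod_cast hm0
            have : π ≤ (m : ℝ) * π := by nlinarith
            exact lt_abs.2 (Or.inr (by linarith))
        · rcases le_or_gt m 1 with hm0 | hm0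
          · have hm' : (m : ℝ) ≤ 1 := by exact_mod_cast hm0
            have : (m : ℝ) * π ≤ π := by nlinarith
            exact lt_abs.2 (Or.inl (by linarith))
          · have hm' : (2 : ℝ) ≤ (m : ℝ) := by exact_mod_cast hm0
            have : 2 * π ≤ (m : ℝ) * π := by nlinarith
            exact lt_abs.2 (Or.inr (by linarith))
    -- sin nonvanishing on the two intervals
    have hs1 : ∀ x ∈ Set.Icc ε (π - ε), Real.sin (x - ω) ≠ 0 := by
      intro x hx
      refine hsin x 0 ?_ ?_
      · rw [hω'z]; push_cast; linarith [hx.1]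
      · rw [hω'z]; push_cast; linarith [hx.2]
    have hs2 : ∀ x ∈ Set.Icc (π + ε) (2 * π - ε), Real.sin (x - ω) ≠ 0 := by
      intro x hx
      refine hsin x 1 ?_ ?_
      · rw [hω'z]; push_cast; linarith [hx.1]
      · rw [hω'z]; push_cast; linarith [hx.2]
    have hle1 : ε ≤ π - ε := by linarith
    have hle2 : π + ε ≤ 2 * π - ε := by linarith
    have hi1 : IntegrableOn (fun φ : ℝ => Complex.tan (Ψ - φ) * Complex.cot ((φ : ℂ) - ω))
        (Set.Ioo ε (π - ε)) volume :=
      ((hcont _ hs1).integrableOn_Icc).mono_set Set.Ioo_subset_Icc_self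
    have hi2 : IntegrableOn (fun φ : ℝ => Complex.tan (Ψ - φ) * Complex.cot ((φ : ℂ) - ω))
        (Set.Ioo (π + ε) (2 * π - ε)) volume :=
      ((hcont _ hs2).integrableOn_Icc).mono_set Set.Ioo_subset_Icc_self
    have hdisj : Disjoint (Set.Ioo ε (π - ε)) (Set.Ioo (π + ε) (2 * π - ε)) := by
      rw [Set.disjoint_left]
      rintro x ⟨hx1, hx2⟩ ⟨hy1, hy2⟩
      linarith
    rw [hset, MeasureTheory.setIntegral_union hdisj measurableSet_Ioo hi1 hi2,
      int_Ioo _ _ _ hle1, int_Ioo _ _ _ hle2,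
      piece Ψ hΨ ω ε (π - ε) hle1 (by rw [Set.uIcc_of_le hle1]; exact hs1),
      piece Ψ hΨ ω (π + ε) (2 * π - ε) hle2 (by rw [Set.uIcc_of_le hle2]; exact hs2),
      hFint, hFint]
    -- log simplifications
    have hωz : ω = k₀ * π := by rw [hωe, hω'z]; ring
    have l1 : Real.log (Real.sin (π - ε - ω)) = Real.log (Real.sin ε) := by
      have he : π - ε - ω = (-ε) - ((k₀ - 1 : ℤ) : ℝ) * π := by push_cast [hωz]; all_goals ring
      rw [he, log_sin_sub_int (-ε) (k₀ - 1), Real.sin_neg, Real.log_neg_eq_log]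
    have l2 : Real.log (Real.sin (ε - ω)) = Real.log (Real.sin ε) := by
      have he : ε - ω = ε - ((k₀ : ℤ) : ℝ) * π := by push_cast [hωz]; all_goals ring
      rw [he, log_sin_sub_int ε k₀]
    have l3 : Real.log (Real.sin (2 * π - ε - ω)) = Real.log (Real.sin ε) := by
      have he : 2 * π - ε - ω = (-ε) - ((k₀ - 2 : ℤ) : ℝ) * π := by push_cast [hωz]; all_goals ring
      rw [he, log_sin_sub_int (-ε) (k₀ - 2), Real.sin_neg, Real.log_neg_eq_log]
    have l4 : Real.log (Real.sin (π + ε - ω)) = Real.log (Real.sin ε) := by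
      have he : π + ε - ω = ε - ((k₀ - 1 : ℤ) : ℝ) * π := by push_cast [hωz]; all_goals ring
      rw [he, log_sin_sub_int ε (k₀ - 1)]
    rw [l1, l2, l3, l4, hg, ← hT]
    push_cast
    ring
  · -- ω' ∈ (0, π)
    have hω'pos : 0 < ω' := lt_of_le_of_ne hω'0 (Ne.symm hω'z)
    set g : ℝ → ℂ := fun ε =>
      -((2 * π : ℝ) : ℂ) + 4 * (ε : ℂ)
        - T * ((F (ω' - ε) - F 0) + (F (ω' + π - ε) - F (ω' + ε))
          + (F (2 * π) - F (ω' + π + ε))) with hg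
    have hgc : Continuous g := by
      have c1 : Continuous fun ε : ℝ => F (ω' - ε) := hFc.comp (continuous_const.sub continuous_id)
      have c2 : Continuous fun ε : ℝ => F (ω' + π - ε) :=
        hFc.comp (continuous_const.sub continuous_id)
      have c3 : Continuous fun ε : ℝ => F (ω' + ε) := hFc.comp (continuous_const.add continuous_id)
      have c4 : Continuous fun ε : ℝ => F (ω' + π + ε) :=
        hFc.comp (continuous_const.add continuous_id)
      exact (continuous_const.add (continuous_const.mul Complex.continuous_ofReal)).sub
        (continuous_const.mul (((c1.sub continuous_const).add (c2.sub c3)).add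
          (continuous_const.sub c4)))
    have hgt : Tendsto g (nhdsWithin 0 (Set.Ioi 0))
        (nhds (-(2 * π + (∫ φ in (0:ℝ)..(2 * π), Complex.tan (Ψ - φ)) * Complex.tan (Ψ - ω)))) := by
      have h0 : g 0 = -(2 * π + (∫ φ in (0:ℝ)..(2 * π), Complex.tan (Ψ - φ)) * Complex.tan (Ψ - ω)) := by
        rw [hg, hF2π, ← hT]
        simp only [Complex.ofReal_zero, sub_zero, add_zero, mul_zero]
        rw [hF0]
        push_cast
        ring
      rw [← h0]
      exact (hgc.tendsto 0).mono_left nhdsWithin_le_nhds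
    refine Tendsto.congr' ?_ hgt
    have hε₀pos : 0 < min ω' (π - ω') := lt_min hω'pos (by linarith)
    filter_upwards [Ioo_mem_nhdsGT_of_mem (Set.mem_Ico.2 ⟨le_refl (0:ℝ), hε₀pos⟩)] with ε hε
    have hε0 : 0 < ε := hε.1
    have hεa : ε < ω' := lt_of_lt_of_le hε.2 (min_le_left _ _)
    have hεb : ε < π - ω' := lt_of_lt_of_le hε.2 (min_le_right _ _)
    have hset : {φ : ℝ | φ ∈ Set.Icc 0 (2 * π) ∧ ∀ k : ℤ, ε < |φ - ω - k * π|}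
        = Set.Ico 0 (ω' - ε) ∪ (Set.Ioo (ω' + ε) (ω' + π - ε) ∪ Set.Ioc (ω' + π + ε) (2 * π)) := by
      ext φ
      simp only [Set.mem_setOf_eq, Set.mem_Icc, Set.mem_union, Set.mem_Ico, Set.mem_Ioo,
        Set.mem_Ioc]
      rw [hiff ε φ]
      constructor
      · rintro ⟨⟨hφ0, hφ2⟩, hm⟩
        have h0 := hm 0
        have h1 := hm 1
        simp only [Int.cast_zero, Int.cast_one, zero_mul, one_mul, sub_zero] at h0 h1
        rcases lt_abs.1 h0 with hc | hc
        · rcases lt_abs.1 h1 with hd | hd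
          · right; right; exact ⟨by linarith, hφ2⟩
          · right; left; exact ⟨by linarith, by linarith⟩
        · left; exact ⟨hφ0, by linarith⟩
      · intro hmem
        have hφb : 0 ≤ φ ∧ φ ≤ 2 * π := by
          rcases hmem with ⟨h, h'⟩ | ⟨h, h'⟩ | ⟨h, h'⟩ <;> constructor <;> linarith
        refine ⟨⟨hφb.1, hφb.2⟩, ?_⟩
        intro m
        rcases hmem with ⟨h, h'⟩ | ⟨h, h'⟩ | ⟨h, h'⟩
        · rcases le_or_gt 0 m with hm0 | hm0
          · have hm' : (0 : ℝ) ≤ (m : ℝ) := by exact_mod_cast hm0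
            have : (0 : ℝ) ≤ (m : ℝ) * π := by nlinarith
            exact lt_abs.2 (Or.inr (by linarith))
          · have hmz : m ≤ -1 := by omega
            have hm' : (m : ℝ) ≤ -1 := by exact_mod_cast hmz
            have : (m : ℝ) * π ≤ -π := by nlinarith
            exact lt_abs.2 (Or.inl (by linarith))
        · rcases le_or_gt m 0 with hm0 | hm0
          · have hm' : (m : ℝ) ≤ 0 := by exact_mod_cast hm0
            have : (m : ℝ) * π ≤ 0 := by nlinarith
            exact lt_abs.2 (Or.inl (by linarith))
          · have hm' : (1 : ℝ) ≤ (m : ℝ) := by exact_mod_cast hm0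
            have : π ≤ (m : ℝ) * π := by nlinarith
            exact lt_abs.2 (Or.inr (by linarith))
        · rcases le_or_gt m 1 with hm0 | hm0
          · have hm' : (m : ℝ) ≤ 1 := by exact_mod_cast hm0
            have : (m : ℝ) * π ≤ π := by nlinarith
            exact lt_abs.2 (Or.inl (by linarith))
          · have hm' : (2 : ℝ) ≤ (m : ℝ) := by exact_mod_cast hm0
            have : 2 * π ≤ (m : ℝ) * π := by nlinarith
            exact lt_abs.2 (Or.inr (by linarith))
    have hs1 : ∀ x ∈ Set.Icc (0:ℝ) (ω' - ε), Real.sin (x - ω) ≠ 0 := by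
      intro x hx
      refine hsin x (-1) ?_ ?_
      · push_cast; linarith [hx.1]
      · push_cast; linarith [hx.2]
    have hs2 : ∀ x ∈ Set.Icc (ω' + ε) (ω' + π - ε), Real.sin (x - ω) ≠ 0 := by
      intro x hx
      refine hsin x 0 ?_ ?_
      · push_cast; linarith [hx.1]
      · push_cast; linarith [hx.2]
    have hs3 : ∀ x ∈ Set.Icc (ω' + π + ε) (2 * π), Real.sin (x - ω) ≠ 0 := by
      intro x hx
      refine hsin x 1 ?_ ?_
      · push_cast; linarith [hx.1]
      · push_cast; linarith [hx.2]
    have hle1 : (0:ℝ) ≤ ω' - ε := by linarith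
    have hle2 : ω' + ε ≤ ω' + π - ε := by linarith
    have hle3 : ω' + π + ε ≤ 2 * π := by linarith
    have hi1 : IntegrableOn (fun φ : ℝ => Complex.tan (Ψ - φ) * Complex.cot ((φ : ℂ) - ω))
        (Set.Ico 0 (ω' - ε)) volume :=
      ((hcont _ hs1).integrableOn_Icc).mono_set Set.Ico_subset_Icc_self
    have hi2 : IntegrableOn (fun φ : ℝ => Complex.tan (Ψ - φ) * Complex.cot ((φ : ℂ) - ω))
        (Set.Ioo (ω' + ε) (ω' + π - ε)) volume :=
      ((hcont _ hs2).integrableOn_Icc).mono_set Set.Ioo_subset_Icc_self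
    have hi3 : IntegrableOn (fun φ : ℝ => Complex.tan (Ψ - φ) * Complex.cot ((φ : ℂ) - ω))
        (Set.Ioc (ω' + π + ε) (2 * π)) volume :=
      ((hcont _ hs3).integrableOn_Icc).mono_set Set.Ioc_subset_Icc_self
    have hd23 : Disjoint (Set.Ioo (ω' + ε) (ω' + π - ε)) (Set.Ioc (ω' + π + ε) (2 * π)) := by
      rw [Set.disjoint_left]
      rintro x ⟨hx1, hx2⟩ ⟨hy1, hy2⟩
      linarith
    have hd123 : Disjoint (Set.Ico (0:ℝ) (ω' - ε))
        (Set.Ioo (ω' + ε) (ω' + π - ε) ∪ Set.Ioc (ω' + π + ε) (2 * π)) := by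
      rw [Set.disjoint_union_right]
      constructor <;>
        · rw [Set.disjoint_left]
          rintro x ⟨hx1, hx2⟩ ⟨hy1, hy2⟩
          linarith
    rw [hset,
      MeasureTheory.setIntegral_union hd123 (measurableSet_Ioo.union measurableSet_Ioc) hi1
        (hi2.union hi3),
      MeasureTheory.setIntegral_union hd23 measurableSet_Ioc hi2 hi3,
      int_Ico _ _ _ hle1, int_Ioo _ _ _ hle2, int_Ioc _ _ _ hle3,
      piece Ψ hΨ ω 0 (ω' - ε) hle1 (by rw [Set.uIcc_of_le hle1]; exact hs1),
      piece Ψ hΨ ω (ω' + ε) (ω' + π - ε) hle2 (by rw [Set.uIcc_of_le hle2]; exact hs2),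
      piece Ψ hΨ ω (ω' + π + ε) (2 * π) hle3 (by rw [Set.uIcc_of_le hle3]; exact hs3),
      hFint, hFint, hFint]
    have l1 : Real.log (Real.sin (ω' - ε - ω)) = Real.log (Real.sin ε) := by
      have he : ω' - ε - ω = (-ε) - ((k₀ : ℤ) : ℝ) * π := by push_cast [hωe]; all_goals ring
      rw [he, log_sin_sub_int (-ε) k₀, Real.sin_neg, Real.log_neg_eq_log]
    have l2 : Real.log (Real.sin (0 - ω)) = Real.log (Real.sin ω') := by
      have he : 0 - ω = (-ω') - ((k₀ : ℤ) : ℝ) * π := by push_cast [hωe]; all_goals ring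
      rw [he, log_sin_sub_int (-ω') k₀, Real.sin_neg, Real.log_neg_eq_log]
    have l3 : Real.log (Real.sin (ω' + π - ε - ω)) = Real.log (Real.sin ε) := by
      have he : ω' + π - ε - ω = (-ε) - ((k₀ - 1 : ℤ) : ℝ) * π := by push_cast [hωe]; all_goals ring
      rw [he, log_sin_sub_int (-ε) (k₀ - 1), Real.sin_neg, Real.log_neg_eq_log]
    have l4 : Real.log (Real.sin (ω' + ε - ω)) = Real.log (Real.sin ε) := by
      have he : ω' + ε - ω = ε - ((k₀ : ℤ) : ℝ) * π := by push_cast [hωe]; all_goals ring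
      rw [he, log_sin_sub_int ε k₀]
    have l5 : Real.log (Real.sin (2 * π - ω)) = Real.log (Real.sin ω') := by
      have he : 2 * π - ω = (-ω') - ((k₀ - 2 : ℤ) : ℝ) * π := by push_cast [hωe]; all_goals ring
      rw [he, log_sin_sub_int (-ω') (k₀ - 2), Real.sin_neg, Real.log_neg_eq_log]
    have l6 : Real.log (Real.sin (ω' + π + ε - ω)) = Real.log (Real.sin ε) := by
      have he : ω' + π + ε - ω = ε - ((k₀ - 1 : ℤ) : ℝ) * π := by push_cast [hωe]; all_goals ring
      rw [he, log_sin_sub_int ε (k₀ - 1)]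
    rw [l1, l2, l3, l4, l5, l6, hg, ← hT]
    push_cast
    ring
end

section
/- If N : ℝ → Mₙ(ℝ) is continuous and 2π-periodic and satisfies Lothe's integral equation ∫₀^{2π} N(φ) ln|sin(φ-ω)| dφ = 2πω·I + (∫₀^ω N(φ)dφ)(∫₀^{2π} N(φ)dφ) + const for all ω, and additionally (∫₀^{2π} N dφ)² = -(2π)² I, then the difference between -(1/(2π)²)[I ln r + ∫₀^ω N dφ](∫₀^{2π} N dφ)·v and -(1/(2π)²)[(∫₀^{2π} N dφ) ln r - 2πω I + ∫₀^{2π} N(φ) ln|sin(φ-ω)| dφ]·v is a constant vector independent of (r, ω). -/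
open Real Matrix

/-- Equivalence of the two forms of the 2D line-defect solution: if `N` is
continuous, `2π`-periodic, satisfies Lothe's integral equation
`∫₀^{2π} N(φ) ln|sin(φ-ω)| dφ = 2πω I + (∫₀^ω N)(∫₀^{2π} N) + K` and
`(∫₀^{2π} N)² = -(2π)² I`, then the expressions
`-(1/(2π)²)[I ln r + ∫₀^ω N](∫₀^{2π} N) v` and
`-(1/(2π)²)[(∫₀^{2π} N) ln r - 2πω I + ∫₀^{2π} N(φ) ln|sin(φ-ω)| dφ] v`
differ by a constant vector independent of `(r, ω)`. -/
theorem two_forms_equivalent (n : ℕ)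
    (N : ℝ → Matrix (Fin n) (Fin n) ℝ)
    (hcont : ∀ i j, Continuous fun φ => N φ i j)
    (hper : ∀ φ, N (φ + 2 * π) = N φ)
    (A : ℝ → Matrix (Fin n) (Fin n) ℝ)
    (hA : ∀ ω i j, A ω i j = ∫ φ in (0:ℝ)..ω, N φ i j)
    (B : Matrix (Fin n) (Fin n) ℝ) (hB : B = A (2 * π))
    (L : ℝ → Matrix (Fin n) (Fin n) ℝ)
    (hL : ∀ ω i j, L ω i j = ∫ φ in (0:ℝ)..(2 * π), N φ i j * Real.log |Real.sin (φ - ω)|)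
    (K : Matrix (Fin n) (Fin n) ℝ)
    (hLothe : ∀ ω : ℝ, L ω = (2 * π * ω) • (1 : Matrix (Fin n) (Fin n) ℝ) + A ω * B + K)
    (hsq : B * B = -((2 * π) ^ 2) • (1 : Matrix (Fin n) (Fin n) ℝ))
    (v : Fin n → ℝ) :
    ∃ c : Fin n → ℝ, ∀ r ω : ℝ, 0 < r →
      (-(1 / (2 * π) ^ 2)) •
          ((Real.log r • (1 : Matrix (Fin n) (Fin n) ℝ) + A ω) * B).mulVec v
        - (-(1 / (2 * π) ^ 2)) •
          (Real.log r • B - (2 * π * ω) • (1 : Matrix (Fin n) (Fin n) ℝ) + L ω).mulVec v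
      = c := by
  refine ⟨(1 / (2 * π) ^ 2) • K.mulVec v, fun r ω _ => ?_⟩
  have h : Real.log r • B - (2 * π * ω) • (1 : Matrix (Fin n) (Fin n) ℝ) + L ω
      = (Real.log r • (1 : Matrix (Fin n) (Fin n) ℝ) + A ω) * B + K := by
    rw [hLothe]
    noncomm_ring
  rw [h, Matrix.add_mulVec, smul_add]
  funext i
  simp [Matrix.mulVec, smul_smul]
end
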